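/- arXiv:2604.19571 — 2 statements merged into one kernel-verified Lean document; each statement's English description precedes it below -/
import Mathlib

section
/- Let n, m be positive integers, let C ∈ ℝ^{n×m}, let a ∈ ℝ^n and b ∈ ℝ^m be vectors with every entry strictly positive, and let ε > 0, τ_s > 0, τ_t > 0. Define the unbalanced optimal transport objective 𝒯(T) = ⟨C, T⟩ + ε·KL(T ‖ a bᵀ) + τ_s·KL(T·𝟙 ‖ a) + τ_t·KL(Tᵀ·𝟙 ‖ b) on the set 𝒟 of entrywise nonnegative n×m matrices. Then 𝒯 attains its minimum on 𝒟: there exists T⋆ ∈ 𝒟 with 𝒯(T⋆) ≤ 𝒯(T) for all T ∈ 𝒟. -/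
/-!
Writing every generalized KL term as `v * klFun (t / v)`, the objective is continuous. It is
also coercive on the nonnegative orthant: the marginal penalties are nonnegative, and the convex
conjugate bound `l x - (exp l - 1) ≤ klFun x`, taken at `l = (1 - C i j) / ε`, shows that the
cost plus the entropic term of each entry dominates `T i j` up to a constant. Hence all
sublevel sets in the orthant are bounded, and a minimum exists.
-/

open scoped BigOperators

/-- Generalized Kullback–Leibler divergence between vectors, with the convention
`0 * log 0 = 0` (automatic in Lean since `Real.log 0 = 0`). -/
noncomputable def vecKL {k : ℕ} (u v : Fin k → ℝ) : ℝ :=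
  ∑ i, (u i * Real.log (u i / v i) - u i + v i)

/-- Generalized Kullback–Leibler divergence between matrices. -/
noncomputable def matKL {n m : ℕ} (T R : Matrix (Fin n) (Fin m) ℝ) : ℝ :=
  ∑ i, ∑ j, (T i j * Real.log (T i j / R i j) - T i j + R i j)

/-- The unbalanced optimal transport objective
`𝒯(T) = ⟨C, T⟩ + ε·KL(T ‖ a bᵀ) + τ_s·KL(T·𝟙 ‖ a) + τ_t·KL(Tᵀ·𝟙 ‖ b)`. -/
noncomputable def uotObj {n m : ℕ} (C : Matrix (Fin n) (Fin m) ℝ)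
    (a : Fin n → ℝ) (b : Fin m → ℝ) (ε τs τt : ℝ)
    (T : Matrix (Fin n) (Fin m) ℝ) : ℝ :=
  (∑ i, ∑ j, C i j * T i j)
    + ε * matKL T (Matrix.of fun i j => a i * b j)
    + τs * vecKL (fun i => ∑ j, T i j) a
    + τt * vecKL (fun j => ∑ i, T i j) b

open Real InformationTheory Filter Set

theorem sub_exp_add_one_le_klFun {x : ℝ} (hx : 0 ≤ x) (l : ℝ) :
    l * x - exp l + 1 ≤ klFun x := by
  rcases hx.eq_or_lt with rfl | hx
  · simp [klFun_zero, (exp_pos l).le]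
  have h := mul_nonneg (exp_pos l).le (klFun_nonneg (div_nonneg hx.le (exp_pos l).le))
  rw [klFun_apply, log_div hx.ne' (exp_pos l).ne', log_exp] at h
  rw [klFun_apply]
  field_simp at h
  linarith

theorem mul_log_div_sub_add_eq_mul_klFun (t : ℝ) {v : ℝ} (hv : v ≠ 0) :
    t * log (t / v) - t + v = v * klFun (t / v) := by
  rw [klFun_apply]
  field_simp
  ring

theorem sub_le_mul_add_mul_mul_klFun {c ε v t : ℝ} (hε : 0 < ε) (hv : 0 < v) (ht : 0 ≤ t) :
    t - ε * v * (exp ((1 - c) / ε) - 1) ≤ c * t + ε * (v * klFun (t / v)) := by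
  have h := sub_exp_add_one_le_klFun (div_nonneg ht hv.le) ((1 - c) / ε)
  have h' := mul_le_mul_of_nonneg_left h (mul_pos hε hv).le
  have hlin : ε * v * ((1 - c) / ε * (t / v)) = (1 - c) * t := by field_simp
  linarith

theorem Matrix.exists_isMinOn_nonneg_of_coercive {ι κ : Type*}
    {f : Matrix ι κ ℝ → ℝ} (hf : Continuous f) (M : ℝ)
    (hcoer : ∀ T : Matrix ι κ ℝ, (∀ i j, 0 ≤ T i j) → ∀ i j, T i j - M ≤ f T) :
    ∃ T ∈ {T : Matrix ι κ ℝ | ∀ i j, 0 ≤ T i j},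
      IsMinOn f {T : Matrix ι κ ℝ | ∀ i j, 0 ≤ T i j} T := by
  have hclosed : IsClosed {T : Matrix ι κ ℝ | ∀ i j, 0 ≤ T i j} := by
    simp only [ofPred_forall]
    exact isClosed_iInter fun i => isClosed_iInter fun j =>
      isClosed_le continuous_const (by fun_prop)
  refine hf.continuousOn.exists_isMinOn' hclosed (x₀ := 0) (fun _ _ => le_rfl) ?_
  rw [(hasBasis_cocompact.inf_principal _).eventually_iff]
  refine ⟨univ.pi fun _ => univ.pi fun _ => Icc 0 (f 0 + M),
    isCompact_univ_pi fun _ => isCompact_univ_pi fun _ => isCompact_Icc, ?_⟩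
  rintro T ⟨hT_out, hT_nonneg⟩
  obtain ⟨i, j, hij⟩ : ∃ i j, f 0 + M < T i j := by
    by_contra! h
    exact hT_out fun i _ j _ => ⟨hT_nonneg i j, h i j⟩
  linarith [hcoer T hT_nonneg i j]

theorem uotObj_eq_klFun {n m : ℕ} (C : Matrix (Fin n) (Fin m) ℝ)
    {a : Fin n → ℝ} (ha : ∀ i, 0 < a i) {b : Fin m → ℝ} (hb : ∀ j, 0 < b j)
    (ε τs τt : ℝ) (T : Matrix (Fin n) (Fin m) ℝ) :
    uotObj C a b ε τs τt T =
      ∑ i, ∑ j, C i j * T i j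
        + ε * ∑ i, ∑ j, a i * b j * klFun (T i j / (a i * b j))
        + τs * ∑ i, a i * klFun ((∑ j, T i j) / a i)
        + τt * ∑ j, b j * klFun ((∑ i, T i j) / b j) := by
  simp only [uotObj, matKL, vecKL, Matrix.of_apply,
    mul_log_div_sub_add_eq_mul_klFun _ (ha _).ne', mul_log_div_sub_add_eq_mul_klFun _ (hb _).ne',
    mul_log_div_sub_add_eq_mul_klFun _ (mul_pos (ha _) (hb _)).ne']

theorem continuous_uotObj {n m : ℕ} (C : Matrix (Fin n) (Fin m) ℝ)
    {a : Fin n → ℝ} (ha : ∀ i, 0 < a i) {b : Fin m → ℝ} (hb : ∀ j, 0 < b j) (ε τs τt : ℝ) :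
    Continuous (uotObj C a b ε τs τt) := by
  simp only [funext (uotObj_eq_klFun C ha hb ε τs τt)]
  fun_prop

theorem sum_sub_le_uotObj {n m : ℕ} (C : Matrix (Fin n) (Fin m) ℝ)
    {a : Fin n → ℝ} (ha : ∀ i, 0 < a i) {b : Fin m → ℝ} (hb : ∀ j, 0 < b j)
    {ε τs τt : ℝ} (hε : 0 < ε) (hτs : 0 ≤ τs) (hτt : 0 ≤ τt)
    {T : Matrix (Fin n) (Fin m) ℝ} (hT : ∀ i j, 0 ≤ T i j) :
    ∑ i, ∑ j, T i j - ∑ i, ∑ j, ε * (a i * b j) * (exp ((1 - C i j) / ε) - 1)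
      ≤ uotObj C a b ε τs τt T := by
  have hentry : ∑ i, ∑ j, (T i j - ε * (a i * b j) * (exp ((1 - C i j) / ε) - 1))
      ≤ ∑ i, ∑ j, (C i j * T i j + ε * (a i * b j * klFun (T i j / (a i * b j)))) :=
    Finset.sum_le_sum fun i _ => Finset.sum_le_sum fun j _ =>
      sub_le_mul_add_mul_mul_klFun hε (mul_pos (ha i) (hb j)) (hT i j)
  have hrows : 0 ≤ τs * ∑ i, a i * klFun ((∑ j, T i j) / a i) :=
    mul_nonneg hτs <| Finset.sum_nonneg fun i _ => mul_nonneg (ha i).le <| klFun_nonneg <|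
      div_nonneg (Finset.sum_nonneg fun j _ => hT i j) (ha i).le
  have hcols : 0 ≤ τt * ∑ j, b j * klFun ((∑ i, T i j) / b j) :=
    mul_nonneg hτt <| Finset.sum_nonneg fun j _ => mul_nonneg (hb j).le <| klFun_nonneg <|
      div_nonneg (Finset.sum_nonneg fun i _ => hT i j) (hb j).le
  simp only [Finset.sum_sub_distrib, Finset.sum_add_distrib, ← Finset.mul_sum] at hentry
  rw [uotObj_eq_klFun C ha hb]
  linarith

theorem uotObj_exists_min_general (n m : ℕ)
    (C : Matrix (Fin n) (Fin m) ℝ)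
    (a : Fin n → ℝ) (ha : ∀ i, 0 < a i)
    (b : Fin m → ℝ) (hb : ∀ j, 0 < b j)
    (ε τs τt : ℝ) (hε : 0 < ε) (hτs : 0 < τs) (hτt : 0 < τt) :
    ∃ Tstar : Matrix (Fin n) (Fin m) ℝ, (∀ i j, 0 ≤ Tstar i j) ∧
      ∀ T : Matrix (Fin n) (Fin m) ℝ, (∀ i j, 0 ≤ T i j) →
        uotObj C a b ε τs τt Tstar ≤ uotObj C a b ε τs τt T := by
  have hcoer : ∀ T : Matrix (Fin n) (Fin m) ℝ, (∀ i j, 0 ≤ T i j) → ∀ i j,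
      T i j - ∑ i, ∑ j, ε * (a i * b j) * (exp ((1 - C i j) / ε) - 1)
        ≤ uotObj C a b ε τs τt T := by
    intro T hT i j
    have hij : T i j ≤ ∑ i, ∑ j, T i j :=
      (Finset.single_le_sum (fun j _ => hT i j) (Finset.mem_univ j)).trans <|
        Finset.single_le_sum (fun i _ => Finset.sum_nonneg fun j _ => hT i j)
          (Finset.mem_univ i)
    linarith [sum_sub_le_uotObj C ha hb hε hτs.le hτt.le hT]
  obtain ⟨Tstar, hTstar, hmin⟩ :=
    Matrix.exists_isMinOn_nonneg_of_coercive (continuous_uotObj C ha hb ε τs τt) _ hcoer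
  exact ⟨Tstar, hTstar, fun T hT => hmin hT⟩

/-- The unbalanced optimal transport objective attains its minimum on the set `𝒟`
of entrywise nonnegative matrices: there exists `T⋆ ∈ 𝒟` with `𝒯(T⋆) ≤ 𝒯(T)` for
all `T ∈ 𝒟`. -/
theorem uotObj_exists_min (n m : ℕ) (hn : 0 < n) (hm : 0 < m)
    (C : Matrix (Fin n) (Fin m) ℝ)
    (a : Fin n → ℝ) (ha : ∀ i, 0 < a i)
    (b : Fin m → ℝ) (hb : ∀ j, 0 < b j)
    (ε τs τt : ℝ) (hε : 0 < ε) (hτs : 0 < τs) (hτt : 0 < τt) :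
    ∃ Tstar : Matrix (Fin n) (Fin m) ℝ, (∀ i j, 0 ≤ Tstar i j) ∧
      ∀ T : Matrix (Fin n) (Fin m) ℝ, (∀ i j, 0 ≤ T i j) →
        uotObj C a b ε τs τt Tstar ≤ uotObj C a b ε τs τt T :=
  uotObj_exists_min_general n m C a ha b hb ε τs τt hε hτs hτt
end

section
/- (Proposition 1) Let n, m be positive integers, let C ∈ ℝ^{n×m}, let a ∈ ℝ^n and b ∈ ℝ^m be vectors with every entry strictly positive, and let ε > 0, τ_s > 0, τ_t > 0. Define the unbalanced optimal transport objective 𝒯(T) = ⟨C, T⟩ + ε·KL(T ‖ a bᵀ) + τ_s·KL(T·𝟙 ‖ a) + τ_t·KL(Tᵀ·𝟙 ‖ b) on the set 𝒟 of entrywise nonnegative n×m matrices. Then 𝒯 admits a unique minimizer on 𝒟: there exists exactly one T⋆ ∈ 𝒟 such that 𝒯(T⋆) ≤ 𝒯(T) for all T ∈ 𝒟. -/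
open scoped BigOperators

noncomputable def psiKL (v x : ℝ) : ℝ := x * Real.log (x / v) - x + v

lemma psiKL_eq (v : ℝ) (hv : v ≠ 0) (x : ℝ) :
    psiKL v x = x * Real.log x + (-(Real.log v + 1) * x + v) := by
  rcases eq_or_ne x 0 with rfl | hx
  · simp [psiKL]
  · unfold psiKL; rw [Real.log_div hx hv]; ring

lemma convexOn_affine (c d : ℝ) : ConvexOn ℝ (Set.Ici (0:ℝ)) (fun x => c * x + d) := by
  refine ⟨convex_Ici 0, fun x _ y _ p q hp hq hpq => le_of_eq ?_⟩
  simp only [smul_eq_mul]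
  linear_combination (-d) * hpq

lemma psiKL_strictConvexOn (v : ℝ) (hv : 0 < v) :
    StrictConvexOn ℝ (Set.Ici 0) (psiKL v) := by
  have h : psiKL v = fun x => x * Real.log x + (-(Real.log v + 1) * x + v) := by
    funext x; exact psiKL_eq v hv.ne' x
  rw [h]
  exact Real.strictConvexOn_mul_log.add_convexOn (convexOn_affine _ _)

lemma psiKL_continuous (v : ℝ) (hv : v ≠ 0) : Continuous (psiKL v) := by
  have h : psiKL v = fun x => x * Real.log x + (-(Real.log v + 1) * x + v) := by
    funext x; exact psiKL_eq v hv x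
  rw [h]
  exact Real.continuous_mul_log.add (by continuity)

lemma psiKL_nonneg (v : ℝ) (hv : 0 < v) {x : ℝ} (hx : 0 ≤ x) : 0 ≤ psiKL v x := by
  rcases hx.eq_or_lt with rfl | hx
  · simp [psiKL]; linarith
  · have h1 : Real.log (v / x) ≤ v / x - 1 := Real.log_le_sub_one_of_pos (by positivity)
    have h2 : Real.log (v / x) = Real.log v - Real.log x := Real.log_div hv.ne' hx.ne'
    have h3 : Real.log (x / v) = Real.log x - Real.log v := Real.log_div hx.ne' hv.ne'
    unfold psiKL
    have h4 : v / x - 1 ≥ Real.log v - Real.log x := by rw [← h2]; linarith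
    have h5 : x * Real.log (x / v) ≥ x - v := by
      rw [h3]
      have := mul_le_mul_of_nonneg_left h4 hx.le
      have hx' : x * (v / x) = v := by field_simp
      nlinarith
    linarith

lemma psiKL_midpoint_le (v : ℝ) (hv : 0 < v) {x y : ℝ} (hx : 0 ≤ x) (hy : 0 ≤ y) :
    psiKL v ((x + y) / 2) ≤ (psiKL v x + psiKL v y) / 2 := by
  have h := (psiKL_strictConvexOn v hv).convexOn.2 (Set.mem_Ici.2 hx) (Set.mem_Ici.2 hy)
    (by norm_num : (0:ℝ) ≤ 1/2) (by norm_num : (0:ℝ) ≤ 1/2) (by norm_num)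
  simp only [smul_eq_mul] at h
  calc psiKL v ((x + y) / 2) = psiKL v (1/2 * x + 1/2 * y) := by ring_nf
    _ ≤ 1/2 * psiKL v x + 1/2 * psiKL v y := h
    _ = (psiKL v x + psiKL v y) / 2 := by ring

lemma psiKL_midpoint_lt (v : ℝ) (hv : 0 < v) {x y : ℝ} (hx : 0 ≤ x) (hy : 0 ≤ y)
    (hxy : x ≠ y) :
    psiKL v ((x + y) / 2) < (psiKL v x + psiKL v y) / 2 := by
  have h := (psiKL_strictConvexOn v hv).2 (Set.mem_Ici.2 hx) (Set.mem_Ici.2 hy) hxy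
    (by norm_num : (0:ℝ) < 1/2) (by norm_num : (0:ℝ) < 1/2) (by norm_num)
  simp only [smul_eq_mul] at h
  calc psiKL v ((x + y) / 2) = psiKL v (1/2 * x + 1/2 * y) := by ring_nf
    _ < 1/2 * psiKL v x + 1/2 * psiKL v y := h
    _ = (psiKL v x + psiKL v y) / 2 := by ring

/-- Coercivity: `ε·ψ_v(x) + c·x ≥ -|c|·X` where `X = v·exp(|c|/ε + 2)`,
and if `x ≥ X` then `ε·ψ_v(x) + c·x ≥ ε·x`. -/
lemma psiKL_coercive (v c ε : ℝ) (hv : 0 < v) (hε : 0 < ε) {x : ℝ} (hx : 0 ≤ x) :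
    -|c| * (v * Real.exp (|c|/ε + 2)) ≤ ε * psiKL v x + c * x ∧
    (v * Real.exp (|c|/ε + 2) ≤ x → ε * x ≤ ε * psiKL v x + c * x) := by
  set X := v * Real.exp (|c|/ε + 2) with hX
  have hXpos : 0 < X := by positivity
  have hkey : X ≤ x → ε * x ≤ ε * psiKL v x + c * x := by
    intro hxX
    have hxpos : 0 < x := lt_of_lt_of_le hXpos hxX
    have hlog : |c|/ε + 2 ≤ Real.log (x / v) := by
      have : Real.exp (|c|/ε + 2) ≤ x / v := by
        rw [le_div_iff₀ hv]; linarith [hX ▸ hxX]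
      calc |c|/ε + 2 = Real.log (Real.exp (|c|/ε + 2)) := (Real.log_exp _).symm
        _ ≤ Real.log (x / v) := Real.log_le_log (Real.exp_pos _) this
    have h1 : x * (|c|/ε + 2) ≤ x * Real.log (x / v) :=
      mul_le_mul_of_nonneg_left hlog hxpos.le
    have h2 : ε * psiKL v x ≥ ε * (x * (|c|/ε + 2) - x + v) := by
      unfold psiKL; nlinarith
    have h3 : ε * (x * (|c|/ε + 2) - x + v) = |c| * x + ε * x + ε * v := by
      field_simp; ring
    nlinarith [abs_nonneg c, neg_abs_le c, (neg_abs_le c).trans (le_abs_self c),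
      mul_le_mul_of_nonneg_right (neg_abs_le c) hxpos.le]
  refine ⟨?_, hkey⟩
  rcases le_or_gt x X with h | h
  · have h1 : 0 ≤ ε * psiKL v x := mul_nonneg hε.le (psiKL_nonneg v hv hx)
    have h2 : -|c| * x ≤ c * x := by
      have := mul_le_mul_of_nonneg_right (neg_abs_le c) hx
      linarith
    have h3 : -|c| * X ≤ -|c| * x := by
      have := mul_le_mul_of_nonneg_right h (abs_nonneg c)
      nlinarith
    linarith
  · have := hkey h.le
    nlinarith [abs_nonneg c, mul_nonneg hε.le hx, mul_nonneg (abs_nonneg c) hXpos.le]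

/-- (Proposition 1) The unbalanced optimal transport objective admits a unique
minimizer on the set `𝒟` of entrywise nonnegative matrices: there exists exactly
one `T⋆ ∈ 𝒟` such that `𝒯(T⋆) ≤ 𝒯(T)` for all `T ∈ 𝒟`. -/
theorem uotObj_existsUnique_min (n m : ℕ) (hn : 0 < n) (hm : 0 < m)
    (C : Matrix (Fin n) (Fin m) ℝ)
    (a : Fin n → ℝ) (ha : ∀ i, 0 < a i)
    (b : Fin m → ℝ) (hb : ∀ j, 0 < b j)
    (ε τs τt : ℝ) (hε : 0 < ε) (hτs : 0 < τs) (hτt : 0 < τt) :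
    ∃! Tstar : Matrix (Fin n) (Fin m) ℝ, (∀ i j, 0 ≤ Tstar i j) ∧
      ∀ T : Matrix (Fin n) (Fin m) ℝ, (∀ i j, 0 ≤ T i j) →
        uotObj C a b ε τs τt Tstar ≤ uotObj C a b ε τs τt T := by
  set F := uotObj C a b ε τs τt with hFdef
  have hF_eq : ∀ T : Matrix (Fin n) (Fin m) ℝ, F T =
      (∑ i, ∑ j, C i j * T i j)
      + ε * (∑ i, ∑ j, psiKL (a i * b j) (T i j))
      + τs * (∑ i, psiKL (a i) (∑ j, T i j))
      + τt * (∑ j, psiKL (b j) (∑ i, T i j)) := by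
    intro T
    simp [hFdef, uotObj, matKL, vecKL, psiKL]
  have hab : ∀ (i : Fin n) (j : Fin m), 0 < a i * b j := fun i j => mul_pos (ha i) (hb j)
  -- nonnegativity of the tau terms
  have htau_nonneg : ∀ T : Matrix (Fin n) (Fin m) ℝ, (∀ i j, 0 ≤ T i j) →
      (∑ i, ∑ j, C i j * T i j) + ε * (∑ i, ∑ j, psiKL (a i * b j) (T i j)) ≤ F T := by
    intro T hT
    rw [hF_eq T]
    have h1 : 0 ≤ ∑ i, psiKL (a i) (∑ j, T i j) :=
      Finset.sum_nonneg fun i _ => psiKL_nonneg _ (ha i)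
        (Finset.sum_nonneg fun j _ => hT i j)
    have h2 : 0 ≤ ∑ j, psiKL (b j) (∑ i, T i j) :=
      Finset.sum_nonneg fun j _ => psiKL_nonneg _ (hb j)
        (Finset.sum_nonneg fun i _ => hT i j)
    nlinarith [mul_nonneg hτs.le h1, mul_nonneg hτt.le h2]
  -- continuity
  have hentry : ∀ (i : Fin n) (j : Fin m),
      Continuous fun T : Matrix (Fin n) (Fin m) ℝ => T i j :=
    fun i j => (continuous_apply j).comp (continuous_apply i)
  have hcont : Continuous F := by
    have : F = fun T => (∑ i, ∑ j, C i j * T i j)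
      + ε * (∑ i, ∑ j, psiKL (a i * b j) (T i j))
      + τs * (∑ i, psiKL (a i) (∑ j, T i j))
      + τt * (∑ j, psiKL (b j) (∑ i, T i j)) := funext hF_eq
    rw [this]
    refine (((?_ : Continuous _).add ?_).add ?_).add ?_
    · exact continuous_finset_sum _ fun i _ => continuous_finset_sum _ fun j _ =>
        continuous_const.mul (hentry i j)
    · exact continuous_const.mul (continuous_finset_sum _ fun i _ =>
        continuous_finset_sum _ fun j _ =>
          (psiKL_continuous _ (hab i j).ne').comp (hentry i j))
    · exact continuous_const.mul (continuous_finset_sum _ fun i _ =>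
        (psiKL_continuous _ (ha i).ne').comp
          (continuous_finset_sum _ fun j _ => hentry i j))
    · exact continuous_const.mul (continuous_finset_sum _ fun j _ =>
        (psiKL_continuous _ (hb j).ne').comp
          (continuous_finset_sum _ fun i _ => hentry i j))
  -- coercivity constants
  set X : Fin n → Fin m → ℝ :=
    fun i j => a i * b j * Real.exp (|C i j| / ε + 2) with hXdef
  have hXpos : ∀ i j, 0 < X i j := fun i j => mul_pos (hab i j) (Real.exp_pos _)
  set B : ℝ := ∑ i, ∑ j, (-|C i j| * X i j) with hBdef
  set M1 : ℝ := ∑ i, ∑ j, X i j with hM1def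
  have hM1 : ∀ i j, X i j ≤ M1 := by
    intro i j
    calc X i j ≤ ∑ j', X i j' :=
          Finset.single_le_sum (fun j' _ => (hXpos i j').le) (Finset.mem_univ j)
      _ ≤ M1 := Finset.single_le_sum
          (fun i' _ => Finset.sum_nonneg fun j' _ => (hXpos i' j').le)
          (Finset.mem_univ i)
  set M : ℝ := max M1 ((F 0 - B + 1) / ε) with hMdef
  have hM0 : 0 ≤ M := le_trans (Finset.sum_nonneg fun i _ =>
    Finset.sum_nonneg fun j _ => (hXpos i j).le) (le_max_left _ _)
  have hMB : F 0 + 1 ≤ ε * M + B := by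
    have : (F 0 - B + 1) / ε ≤ M := le_max_right _ _
    have h := mul_le_mul_of_nonneg_left this hε.le
    rw [mul_div_cancel₀ _ hε.ne'] at h
    linarith
  -- coercive blowup
  have hcoer : ∀ T : Matrix (Fin n) (Fin m) ℝ, (∀ i j, 0 ≤ T i j) →
      ∀ i0 j0, M ≤ T i0 j0 → F 0 < F T := by
    intro T hT i0 j0 hbig
    set f : Fin n × Fin m → ℝ :=
      fun p => C p.1 p.2 * T p.1 p.2 + ε * psiKL (a p.1 * b p.2) (T p.1 p.2) with hfdef
    set g : Fin n × Fin m → ℝ := fun p => -|C p.1 p.2| * X p.1 p.2 with hgdef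
    have hfg : ∀ p : Fin n × Fin m, g p ≤ f p := by
      intro p
      have h := (psiKL_coercive (a p.1 * b p.2) (C p.1 p.2) ε (hab p.1 p.2) hε
        (hT p.1 p.2)).1
      simp only [hfdef, hgdef, hXdef]
      linarith
    have hf0 : ε * M ≤ f (i0, j0) := by
      have h := (psiKL_coercive (a i0 * b j0) (C i0 j0) ε (hab i0 j0) hε (hT i0 j0)).2
        (le_trans (le_trans (hM1 i0 j0) (le_max_left _ _)) hbig)
      have h2 : ε * M ≤ ε * T i0 j0 := mul_le_mul_of_nonneg_left hbig hε.le
      simp only [hfdef]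
      linarith
    have hg0 : g (i0, j0) ≤ 0 := mul_nonpos_of_nonpos_of_nonneg
      (neg_nonpos.mpr (abs_nonneg _)) (hXpos i0 j0).le
    have hsum_f : ∑ i, ∑ j, f (i, j) = ∑ p : Fin n × Fin m, f p := by
      rw [← Finset.univ_product_univ, Finset.sum_product]
    have hsum_g : ∑ p : Fin n × Fin m, g p = B := by
      rw [hBdef, ← Finset.univ_product_univ, Finset.sum_product]
    have hmain : ε * M + B ≤ ∑ p : Fin n × Fin m, f p := by
      have herase : ∑ p ∈ Finset.univ.erase (i0, j0), g p ≤
          ∑ p ∈ Finset.univ.erase (i0, j0), f p :=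
        Finset.sum_le_sum fun p _ => hfg p
      have h1 : f (i0, j0) + ∑ p ∈ Finset.univ.erase (i0, j0), f p
          = ∑ p : Fin n × Fin m, f p :=
        Finset.add_sum_erase _ f (Finset.mem_univ _)
      have h2 : ∑ p ∈ Finset.univ.erase (i0, j0), g p
          = (∑ p : Fin n × Fin m, g p) - g (i0, j0) :=
        Finset.sum_erase_eq_sub (Finset.mem_univ _)
      rw [hsum_g] at h2
      linarith
    have hFT : ε * M + B ≤ F T := by
      refine le_trans ?_ (htau_nonneg T hT)
      have hsplit : (∑ i, ∑ j, C i j * T i j)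
          + ε * (∑ i, ∑ j, psiKL (a i * b j) (T i j)) = ∑ i, ∑ j, f (i, j) := by
        simp only [hfdef, Finset.sum_add_distrib, Finset.mul_sum]
      rw [hsplit, hsum_f]
      exact hmain
    linarith
  -- existence of minimizer on compact box
  set S : Set (Matrix (Fin n) (Fin m) ℝ) := {T | ∀ i j, T i j ∈ Set.Icc (0:ℝ) M}
    with hSdef
  have hScomp : IsCompact S := by
    have hSeq : S = Set.pi Set.univ fun _ : Fin n =>
        Set.pi Set.univ fun _ : Fin m => Set.Icc (0:ℝ) M := by
      ext T
      constructor
      · intro h i _ j _; exact h i j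
      · intro h i j; exact h i (Set.mem_univ i) j (Set.mem_univ j)
    rw [hSeq]
    exact isCompact_univ_pi fun i => isCompact_univ_pi fun j => isCompact_Icc
  have hzeroS : (0 : Matrix (Fin n) (Fin m) ℝ) ∈ S := by
    intro i j
    simp only [Matrix.zero_apply, Set.mem_Icc]
    exact ⟨le_refl _, hM0⟩
  obtain ⟨T0, hT0S, hT0min⟩ := hScomp.exists_isMinOn ⟨0, hzeroS⟩ hcont.continuousOn
  have hT0n : ∀ i j, 0 ≤ T0 i j := fun i j => (hT0S i j).1
  have hT0glob : ∀ T : Matrix (Fin n) (Fin m) ℝ, (∀ i j, 0 ≤ T i j) → F T0 ≤ F T := by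
    intro T hT
    by_cases hTS : T ∈ S
    · exact hT0min hTS
    · have hex : ∃ i j, M < T i j := by
        by_contra h
        push_neg at h
        exact hTS fun i j => ⟨hT i j, h i j⟩
      obtain ⟨i0, j0, hij⟩ := hex
      exact le_of_lt (lt_of_le_of_lt (hT0min hzeroS) (hcoer T hT i0 j0 hij.le))
  -- strict convexity: midpoint strictly better
  have hmid : ∀ T1 T2 : Matrix (Fin n) (Fin m) ℝ, (∀ i j, 0 ≤ T1 i j) →
      (∀ i j, 0 ≤ T2 i j) → T1 ≠ T2 →
      F (Matrix.of fun i j => (T1 i j + T2 i j) / 2) < (F T1 + F T2) / 2 := by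
    intro T1 T2 h1n h2n hne
    set Tm : Matrix (Fin n) (Fin m) ℝ := Matrix.of fun i j => (T1 i j + T2 i j) / 2
      with hTmdef
    have hTm : ∀ i j, Tm i j = (T1 i j + T2 i j) / 2 := fun i j => rfl
    -- linear part
    have hlin : ∑ i, ∑ j, C i j * Tm i j
        = ((∑ i, ∑ j, C i j * T1 i j) + ∑ i, ∑ j, C i j * T2 i j) / 2 := by
      rw [← Finset.sum_add_distrib, Finset.sum_div]
      refine Finset.sum_congr rfl fun i _ => ?_
      rw [← Finset.sum_add_distrib, Finset.sum_div]
      exact Finset.sum_congr rfl fun j _ => by rw [hTm]; ring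
    -- matKL part, strict
    have hexij : ∃ p : Fin n × Fin m, T1 p.1 p.2 ≠ T2 p.1 p.2 := by
      by_contra h
      push_neg at h
      exact hne (by ext i j; exact h (i, j))
    have hmat : ∑ i, ∑ j, psiKL (a i * b j) (Tm i j)
        < ((∑ i, ∑ j, psiKL (a i * b j) (T1 i j))
          + ∑ i, ∑ j, psiKL (a i * b j) (T2 i j)) / 2 := by
      have e1 : ∑ i, ∑ j, psiKL (a i * b j) (Tm i j)
          = ∑ p : Fin n × Fin m, psiKL (a p.1 * b p.2) (Tm p.1 p.2) := by
        rw [← Finset.univ_product_univ, Finset.sum_product]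
      have e2 : ((∑ i, ∑ j, psiKL (a i * b j) (T1 i j))
            + ∑ i, ∑ j, psiKL (a i * b j) (T2 i j)) / 2
          = ∑ p : Fin n × Fin m,
              (psiKL (a p.1 * b p.2) (T1 p.1 p.2) + psiKL (a p.1 * b p.2) (T2 p.1 p.2)) / 2 := by
        rw [← Finset.sum_add_distrib, Finset.sum_div]
        rw [← Finset.univ_product_univ, Finset.sum_product]
        refine Finset.sum_congr rfl fun i _ => ?_
        rw [← Finset.sum_add_distrib, Finset.sum_div]
      rw [e1, e2]
      obtain ⟨p0, hp0⟩ := hexij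
      refine Finset.sum_lt_sum (fun p _ => ?_) ⟨p0, Finset.mem_univ _, ?_⟩
      · rw [hTm]
        exact psiKL_midpoint_le _ (hab p.1 p.2) (h1n p.1 p.2) (h2n p.1 p.2)
      · rw [hTm]
        exact psiKL_midpoint_lt _ (hab p0.1 p0.2) (h1n p0.1 p0.2) (h2n p0.1 p0.2) hp0
    -- row sums part
    have hrow : ∑ i, psiKL (a i) (∑ j, Tm i j)
        ≤ ((∑ i, psiKL (a i) (∑ j, T1 i j)) + ∑ i, psiKL (a i) (∑ j, T2 i j)) / 2 := by
      rw [← Finset.sum_add_distrib, Finset.sum_div]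
      refine Finset.sum_le_sum fun i _ => ?_
      have : ∑ j, Tm i j = ((∑ j, T1 i j) + ∑ j, T2 i j) / 2 := by
        rw [← Finset.sum_add_distrib, Finset.sum_div]
        exact Finset.sum_congr rfl fun j _ => hTm i j
      rw [this]
      exact psiKL_midpoint_le _ (ha i) (Finset.sum_nonneg fun j _ => h1n i j)
        (Finset.sum_nonneg fun j _ => h2n i j)
    have hcol : ∑ j, psiKL (b j) (∑ i, Tm i j)
        ≤ ((∑ j, psiKL (b j) (∑ i, T1 i j)) + ∑ j, psiKL (b j) (∑ i, T2 i j)) / 2 := by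
      rw [← Finset.sum_add_distrib, Finset.sum_div]
      refine Finset.sum_le_sum fun j _ => ?_
      have : ∑ i, Tm i j = ((∑ i, T1 i j) + ∑ i, T2 i j) / 2 := by
        rw [← Finset.sum_add_distrib, Finset.sum_div]
        exact Finset.sum_congr rfl fun i _ => hTm i j
      rw [this]
      exact psiKL_midpoint_le _ (hb j) (Finset.sum_nonneg fun i _ => h1n i j)
        (Finset.sum_nonneg fun i _ => h2n i j)
    rw [hF_eq Tm, hF_eq T1, hF_eq T2, hlin]
    have h1 := mul_lt_mul_of_pos_left hmat hε
    have h2 := mul_le_mul_of_nonneg_left hrow hτs.le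
    have h3 := mul_le_mul_of_nonneg_left hcol hτt.le
    linarith
  -- assemble
  refine ⟨T0, ⟨hT0n, fun T hT => hT0glob T hT⟩, ?_⟩
  rintro T1 ⟨hT1n, hT1min⟩
  by_contra hne
  have heq : F T1 = F T0 := le_antisymm (hT1min T0 hT0n) (hT0glob T1 hT1n)
  have hlt := hmid T1 T0 hT1n hT0n hne
  have hTmn : ∀ i j, 0 ≤ (Matrix.of fun i j => (T1 i j + T0 i j) / 2) i j := by
    intro i j
    have : (0:ℝ) ≤ (T1 i j + T0 i j) / 2 :=
      div_nonneg (add_nonneg (hT1n i j) (hT0n i j)) (by norm_num)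
    simpa using this
  have hge := hT0glob _ hTmn
  rw [heq] at hlt
  linarith
end
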